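/- arXiv:1310.2525 — 2 statements merged into one kernel-verified Lean document; each statement's English description precedes it below -/
import Mathlib

section
/- For every λ > 0 and every θ ∈ (−π/2, 0), the unnormalized invariant densities satisfy p̃_0(θ;λ) < p̃_1(θ;λ), i.e. λ csc²(θ) H(θ;λ) < sec²(θ)(1 − λ H(θ;λ)). -/
/-!
Since `sin² θ + cos² θ = 1`, the inequality `p̃₀ < p̃₁` is equivalent to `λ H(θ) < sin² θ`.
Put `E(y) = exp(2λ cot 2y)` and `F(y) = sin² y · E(y)`. Then
`-F' = λ sec² y · E(y) - sin 2y · E(y) ≥ 0` on `(-π/2, 0)`, and `F(y) → 0` as `y → 0⁻` because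
`E ≤ 1` there. So `-F'` is integrable on `[θ, 0]` and
`F(θ) = λ ∫_θ^0 sec² y · E(y) dy + ∫_θ^0 (-sin 2y) · E(y) dy`, where the last integral is positive.
Dividing by `E(θ)` gives `λ H(θ) < sin² θ`.
-/

open MeasureTheory ProbabilityTheory Matrix Filter Set
open scoped RealInnerProductSpace

noncomputable section

/-- A real square matrix is Hurwitz if every eigenvalue of its complexification
has strictly negative real part. -/
def IsHurwitz {n : Type*} [Fintype n] [DecidableEq n] (A : Matrix n n ℝ) : Prop :=
  ∀ μ ∈ spectrum ℂ (A.map (Complex.ofReal : ℝ → ℂ)), μ.re < 0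

/-- The operator norm of a real matrix induced by the Euclidean norm on `ℝ^d`. -/
def eopNorm {d : ℕ} (A : Matrix (Fin d) (Fin d) ℝ) : ℝ :=
  ‖Matrix.toEuclideanCLM (𝕜 := ℝ) A‖

/-- A matrix acting on Euclidean space. -/
def applyM {d : ℕ} (A : Matrix (Fin d) (Fin d) ℝ) (x : EuclideanSpace ℝ (Fin d)) :
    EuclideanSpace ℝ (Fin d) :=
  Matrix.toEuclideanCLM (𝕜 := ℝ) A x

/-- `H(θ; λ) = exp(-2 λ cot(2θ)) ∫_θ^0 exp(2 λ cot(2y)) sec²(y) dy`. -/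
def Hfun (lam θ : ℝ) : ℝ :=
  Real.exp (-2 * lam * Real.cot (2 * θ)) *
    ∫ y in θ..0, Real.exp (2 * lam * Real.cot (2 * y)) / Real.cos y ^ 2

/-- The unnormalized invariant density `p̃₀(θ; λ) = λ csc²(θ) H(θ; λ)`. -/
def p0t (lam θ : ℝ) : ℝ := lam * (1 / Real.sin θ ^ 2) * Hfun lam θ

/-- The unnormalized invariant density `p̃₁(θ; λ) = sec²(θ)(1 - λ H(θ; λ))`. -/
def p1t (lam θ : ℝ) : ℝ := (1 / Real.cos θ ^ 2) * (1 - lam * Hfun lam θ)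

open Real Topology intervalIntegral

theorem hasDerivAt_cot_two_mul {y : ℝ} (hy : sin (2 * y) ≠ 0) :
    HasDerivAt (fun t => cot (2 * t)) (-2 / sin (2 * y) ^ 2) y := by
  have h2 : HasDerivAt (fun t : ℝ => 2 * t) 2 y := by
    simpa using (hasDerivAt_id y).const_mul (2 : ℝ)
  rw [funext fun t => cot_eq_cos_div_sin (2 * t)]
  refine (h2.cos.div h2.sin hy).congr_deriv ?_
  field_simp
  linear_combination -sin_sq_add_cos_sq (2 * y)

theorem sin_two_mul_neg {y : ℝ} (hy : y ∈ Ioo (-(π / 2)) 0) : sin (2 * y) < 0 :=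
  sin_neg_of_neg_of_neg_pi_lt (by linarith [hy.2]) (by linarith [hy.1])

def expCot (lam y : ℝ) : ℝ := Real.exp (2 * lam * cot (2 * y))

theorem expCot_pos (lam y : ℝ) : 0 < expCot lam y := Real.exp_pos _

theorem hasDerivAt_expCot (lam : ℝ) {y : ℝ} (hy : sin (2 * y) ≠ 0) :
    HasDerivAt (expCot lam) (expCot lam y * (2 * lam * (-2 / sin (2 * y) ^ 2))) y :=
  ((hasDerivAt_cot_two_mul hy).const_mul (2 * lam)).exp

theorem expCot_le_one {lam y : ℝ} (hlam : 0 ≤ lam) (hy : y ∈ Icc (-(π / 4)) 0) :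
    expCot lam y ≤ 1 := by
  have hcot : cot (2 * y) ≤ 0 := by
    rw [cot_eq_cos_div_sin]
    refine div_nonpos_of_nonneg_of_nonpos (cos_nonneg_of_mem_Icc ⟨?_, ?_⟩) ?_
    · linarith [hy.1]
    · linarith [hy.2, pi_pos]
    · exact sin_nonpos_of_nonpos_of_neg_pi_le (by linarith [hy.2]) (by linarith [hy.1, pi_pos])
  exact Real.exp_le_one_iff.mpr (mul_nonpos_of_nonneg_of_nonpos (by positivity) hcot)

theorem hasDerivAt_sin_sq_mul_expCot (lam : ℝ) {y : ℝ} (hy : sin (2 * y) ≠ 0) :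
    HasDerivAt (fun t => sin t ^ 2 * expCot lam t)
      (expCot lam y * (sin (2 * y) - lam / cos y ^ 2)) y := by
  have hsin : sin y ≠ 0 := fun h => hy (by rw [sin_two_mul, h]; ring)
  have hcos : cos y ≠ 0 := fun h => hy (by rw [sin_two_mul, h]; ring)
  refine ((hasDerivAt_sin y).fun_pow 2 |>.mul (hasDerivAt_expCot lam hy)).congr_deriv ?_
  rw [sin_two_mul]
  field_simp
  ring

theorem continuousAt_expCot (lam : ℝ) {y : ℝ} (hy : sin (2 * y) ≠ 0) :
    ContinuousAt (expCot lam) y :=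
  (hasDerivAt_expCot lam hy).continuousAt

/-- At `0` the product is continuous because `0 < expCot λ ≤ 1` near `0⁻`; the junk value
`expCot λ 0 = 1` (from `cot 0 = 0`) is harmless since `f 0 = 0`. -/
theorem continuousOn_mul_expCot {f : ℝ → ℝ} (hf : Continuous f) (hf0 : f 0 = 0) {lam θ : ℝ}
    (hlam : 0 ≤ lam) (hθ : -(π / 2) < θ) :
    ContinuousOn (fun y => f y * expCot lam y) (Icc θ 0) := by
  intro y hy
  rcases hy.2.lt_or_eq with hy0 | rfl
  · exact (hf.continuousAt.mul (continuousAt_expCot lam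
      (sin_two_mul_neg ⟨hθ.trans_le hy.1, hy0⟩).ne)).continuousWithinAt
  have hbound : ∀ᶠ y in 𝓝[Icc θ 0] 0, ‖f y * expCot lam y‖ ≤ ‖f y‖ := by
    filter_upwards [self_mem_nhdsWithin, mem_nhdsWithin_of_mem_nhds
      (Ioo_mem_nhds (by linarith [pi_pos] : -(π / 4) < 0) one_pos)] with y hy hy'
    rw [norm_mul, Real.norm_of_nonneg (expCot_pos lam y).le]
    exact mul_le_of_le_one_right (norm_nonneg _) (expCot_le_one hlam ⟨hy'.1.le, hy.2⟩)
  have hf_lim : Tendsto (fun y => ‖f y‖) (𝓝[Icc θ 0] 0) (𝓝 0) := by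
    simpa [hf0] using ((hf.tendsto 0).mono_left nhdsWithin_le_nhds).norm
  rw [ContinuousWithinAt, hf0, zero_mul]
  exact squeeze_zero_norm' hbound hf_lim

theorem mul_integral_lt_sin_sq_mul_expCot {lam θ : ℝ} (hlam : 0 ≤ lam)
    (hθ : θ ∈ Ioo (-(π / 2)) 0) :
    lam * ∫ y in θ..0, expCot lam y / cos y ^ 2 < sin θ ^ 2 * expCot lam θ := by
  set g := fun y => expCot lam y / cos y ^ 2
  set h := fun y => -sin (2 * y) * expCot lam y
  have hmem : ∀ y ∈ Ioo θ 0, y ∈ Ioo (-(π / 2)) 0 := fun y hy => ⟨hθ.1.trans hy.1, hy.2⟩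
  have hh_pos : ∀ y ∈ Ioo θ 0, 0 < h y := fun y hy =>
    mul_pos (neg_pos.2 (sin_two_mul_neg (hmem y hy))) (expCot_pos lam y)
  have hderiv : ∀ y ∈ Ioo θ 0,
      HasDerivAt (fun t => -(sin t ^ 2 * expCot lam t)) (lam * g y + h y) y := fun y hy =>
    (hasDerivAt_sin_sq_mul_expCot lam (sin_two_mul_neg (hmem y hy)).ne).neg.congr_deriv
      (by simp only [g, h]; ring)
  have hcont : ContinuousOn (fun t => -(sin t ^ 2 * expCot lam t)) (Icc θ 0) :=
    (continuousOn_mul_expCot (by fun_prop) (by simp) hlam hθ.1).neg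
  have hderiv_nonneg : ∀ y ∈ Ioo θ 0, 0 ≤ lam * g y + h y := fun y hy =>
    add_nonneg (mul_nonneg hlam (div_nonneg (expCot_pos lam y).le (sq_nonneg _)))
      (hh_pos y hy).le
  have hint : IntervalIntegrable (fun y => lam * g y + h y) volume θ 0 :=
    (intervalIntegrable_iff_integrableOn_Ioc_of_le hθ.2.le).2
      (integrableOn_deriv_of_nonneg hcont hderiv hderiv_nonneg)
  have hFTC : ∫ y in θ..0, (lam * g y + h y) = sin θ ^ 2 * expCot lam θ := by
    rw [integral_eq_sub_of_hasDerivAt_of_le hθ.2.le hcont hderiv hint]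
    simp
  have hh_int : IntervalIntegrable h volume θ 0 :=
    (continuousOn_mul_expCot (by fun_prop) (by simp) hlam hθ.1).intervalIntegrable_of_Icc
      hθ.2.le
  have hh_integral_pos : 0 < ∫ y in θ..0, h y :=
    intervalIntegral_pos_of_pos_on hh_int hh_pos hθ.2
  have hsplit :
      ∫ y in θ..0, lam * g y = (∫ y in θ..0, (lam * g y + h y)) - ∫ y in θ..0, h y := by
    rw [← integral_sub hint hh_int]
    simp
  rw [← intervalIntegral.integral_const_mul, hsplit, hFTC]
  linarith

theorem p0t_lt_p1t_iff {lam θ : ℝ} (hsin : sin θ ≠ 0) (hcos : cos θ ≠ 0) :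
    p0t lam θ < p1t lam θ ↔ lam * Hfun lam θ < sin θ ^ 2 := by
  have hp0 : p0t lam θ = lam * Hfun lam θ / sin θ ^ 2 := by rw [p0t]; ring
  have hp1 : p1t lam θ = (1 - lam * Hfun lam θ) / cos θ ^ 2 := by rw [p1t]; ring
  rw [hp0, hp1, div_lt_div_iff₀ (by positivity) (by positivity), cos_sq']
  constructor <;> intro h <;> linarith

theorem mul_Hfun_lt_sin_sq {lam θ : ℝ} (hlam : 0 ≤ lam) (hθ : θ ∈ Ioo (-(π / 2)) 0) :
    lam * Hfun lam θ < sin θ ^ 2 := by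
  have hH : lam * Hfun lam θ =
      (lam * ∫ y in θ..0, expCot lam y / cos y ^ 2) / expCot lam θ := by
    unfold Hfun expCot
    rw [div_eq_mul_inv, ← Real.exp_neg]
    ring_nf
  rw [hH, div_lt_iff₀ (expCot_pos lam θ)]
  exact mul_integral_lt_sin_sq_mul_expCot hlam hθ

/-- For `λ > 0` and `θ ∈ (-π/2, 0)` the unnormalized invariant densities satisfy
`p̃₀(θ; λ) < p̃₁(θ; λ)`, i.e. `λ csc²(θ) H(θ;λ) < sec²(θ)(1 - λ H(θ;λ))`. -/
theorem p0_lt_p1 (lam : ℝ) (hlam : 0 < lam) (θ : ℝ)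
    (hθ : θ ∈ Set.Ioo (-(Real.pi / 2)) (0 : ℝ)) :
    p0t lam θ < p1t lam θ := by
  have hsin : sin θ < 0 := sin_neg_of_neg_of_neg_pi_lt hθ.2 (by linarith [hθ.1, pi_pos])
  have hcos : 0 < cos θ := cos_pos_of_mem_Ioo ⟨hθ.1, hθ.2.trans (by positivity)⟩
  exact (p0t_lt_p1t_iff hsin.ne hcos.ne').2 (mul_Hfun_lt_sin_sq hlam.le hθ)
end
end

section
/- For every λ > 0 and every θ ∈ (−π/2, 0), the functions p̃_0(·;λ) and p̃_1(·;λ) satisfy the stationarity equations: d/dθ[ sin²(θ) · p̃_0(θ;λ) ] = λ (p̃_0(θ;λ) − p̃_1(θ;λ)) and d/dθ[ cos²(θ) · p̃_1(θ;λ) ] = λ (p̃_1(θ;λ) − p̃_0(θ;λ)). -/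
open MeasureTheory ProbabilityTheory Matrix Filter Set
open scoped RealInnerProductSpace

noncomputable section

open Real Topology

/-! The integral in `H` is an integrating-factor solution: since `(2λ cot 2θ)' = -4λ / sin² 2θ`,
`H' = (4λ / sin² 2θ) H - sec² θ`. On the other hand `sin² θ · p̃₀ = λ H`, `cos² θ · p̃₁ = 1 - λ H`
and `p̃₀ - p̃₁ = (4λ / sin² 2θ) H - sec² θ` by `sin 2θ = 2 sin θ cos θ`, so both equations are
`λ` times this ODE. The integral converges because for `λ ≥ 0` the integrand
`exp(2λ cot 2y) sec² y` is decreasing on `(θ, 0)` (`cot 2y → -∞` as `y → 0⁻`). -/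

namespace Real

theorem cot_eq_div : cot = cos / sin := funext cot_eq_cos_div_sin

theorem hasDerivAt_cot {x : ℝ} (hx : sin x ≠ 0) : HasDerivAt cot (-1 / sin x ^ 2) x := by
  rw [cot_eq_div]
  refine ((hasDerivAt_cos x).div (hasDerivAt_sin x) hx).congr_deriv ?_
  congr 1
  linear_combination -sin_sq_add_cos_sq x

@[fun_prop]
theorem measurable_cot : Measurable cot := by
  rw [cot_eq_div]
  exact measurable_cos.div measurable_sin

theorem cot_le_cot_of_le {u v : ℝ} (hu : -π < u) (huv : u ≤ v) (hv : v < 0) :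
    cot v ≤ cot u := by
  have hsu : sin u < 0 := sin_neg_of_neg_of_neg_pi_lt (huv.trans_lt hv) hu
  have hsv : sin v < 0 := sin_neg_of_neg_of_neg_pi_lt hv (hu.trans_le huv)
  have hdiff : cot v - cot u = sin (u - v) / (sin v * sin u) := by
    rw [cot_eq_cos_div_sin, cot_eq_cos_div_sin, sin_sub]
    field_simp [hsu.ne, hsv.ne]
  have : sin (u - v) / (sin v * sin u) ≤ 0 :=
    div_nonpos_of_nonpos_of_nonneg
      (sin_nonpos_of_nonpos_of_neg_pi_le (by linarith) (by linarith))
      (mul_pos_of_neg_of_neg hsv hsu).le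
  linarith

end Real

theorem hasDerivAt_exp_neg_mul_integral_exp_mul {g k : ℝ → ℝ} {g' θ b : ℝ}
    (hg : HasDerivAt g g' θ) (hk : ContinuousAt k θ)
    (hint : IntervalIntegrable (fun y => exp (g y) * k y) volume θ b)
    (hmeas : StronglyMeasurableAtFilter (fun y => exp (g y) * k y) (𝓝 θ)) :
    HasDerivAt (fun x => exp (-g x) * ∫ y in x..b, exp (g y) * k y)
      (-g' * (exp (-g θ) * ∫ y in θ..b, exp (g y) * k y) - k θ) θ := by
  have hF := intervalIntegral.integral_hasDerivAt_left hint hmeas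
    ((hg.continuousAt.rexp).mul hk)
  have hE : HasDerivAt (fun x => exp (-g x)) (exp (-g θ) * -g') θ := hg.neg.exp
  refine (hE.mul hF).congr_deriv ?_
  have : exp (-g θ) * exp (g θ) = 1 := by rw [← exp_add, neg_add_cancel, exp_zero]
  linear_combination -k θ * this

theorem intervalIntegrable_exp_mul_cot_two_mul_div_cos_sq {lam a : ℝ} (hlam : 0 ≤ lam)
    (ha : a ∈ Ioo (-(π / 2)) 0) :
    IntervalIntegrable (fun y => exp (2 * lam * cot (2 * y)) / cos y ^ 2) volume a 0 := by
  obtain ⟨ha₁, ha₂⟩ := ha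
  have hca : 0 < cos a := cos_pos_of_mem_Ioo ⟨ha₁, by linarith [pi_pos]⟩
  rw [intervalIntegrable_iff_integrableOn_Ioo_of_le ha₂.le]
  refine IntegrableOn.of_bound measure_Ioo_lt_top
    (by fun_prop : Measurable _).aestronglyMeasurable (exp (2 * lam * cot (2 * a)) / cos a ^ 2) ?_
  filter_upwards [ae_restrict_mem measurableSet_Ioo] with y ⟨hay, hy0⟩
  have hcos : cos a ≤ cos y := by
    simpa only [cos_neg] using
      cos_le_cos_of_nonneg_of_le_pi (x := -y) (y := -a) (by linarith) (by linarith) (by linarith)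
  have hcot : cot (2 * y) ≤ cot (2 * a) :=
    cot_le_cot_of_le (by linarith) (by linarith) (by linarith)
  rw [norm_of_nonneg (by positivity)]
  gcongr

theorem Hfun_eq (lam : ℝ) :
    Hfun lam = fun x => exp (-(2 * lam * cot (2 * x))) *
      ∫ y in x..0, exp (2 * lam * cot (2 * y)) * (cos y ^ 2)⁻¹ := by
  funext x
  simp only [Hfun, neg_mul, div_eq_mul_inv]

theorem hasDerivAt_Hfun {lam θ : ℝ} (hlam : 0 ≤ lam) (hθ : θ ∈ Ioo (-(π / 2)) 0) :
    HasDerivAt (Hfun lam) (4 * lam / sin (2 * θ) ^ 2 * Hfun lam θ - 1 / cos θ ^ 2) θ := by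
  have hs : sin (2 * θ) ≠ 0 :=
    (sin_neg_of_neg_of_neg_pi_lt (by linarith [hθ.2]) (by linarith [hθ.1])).ne
  have hc : cos θ ≠ 0 := (cos_pos_of_mem_Ioo ⟨hθ.1, by linarith [hθ.2, pi_pos]⟩).ne'
  have hg : HasDerivAt (fun y => 2 * lam * cot (2 * y))
      (2 * lam * (-1 / sin (2 * θ) ^ 2 * 2)) θ :=
    ((hasDerivAt_cot hs).comp θ
      ((hasDerivAt_id θ).const_mul 2 |>.congr_deriv (mul_one 2))).const_mul _
  have hint := intervalIntegrable_exp_mul_cot_two_mul_div_cos_sq hlam hθ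
  simp only [div_eq_mul_inv] at hint
  have hk : ContinuousAt (fun y => (cos y ^ 2)⁻¹) θ :=
    (continuous_cos.continuousAt.pow 2).inv₀ (pow_ne_zero 2 hc)
  have h := hasDerivAt_exp_neg_mul_integral_exp_mul hg hk hint
    (by fun_prop : Measurable _).stronglyMeasurable.stronglyMeasurableAtFilter
  rw [Hfun_eq]
  refine h.congr_deriv ?_
  field_simp
  ring

theorem sin_sq_mul_p0t {lam x : ℝ} (hx : sin x ≠ 0) :
    sin x ^ 2 * p0t lam x = lam * Hfun lam x := by
  unfold p0t
  field_simp

theorem cos_sq_mul_p1t {lam x : ℝ} (hx : cos x ≠ 0) :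
    cos x ^ 2 * p1t lam x = 1 - lam * Hfun lam x := by
  unfold p1t
  field_simp

theorem p0t_sub_p1t {lam θ : ℝ} (hs : sin θ ≠ 0) (hc : cos θ ≠ 0) :
    p0t lam θ - p1t lam θ = 4 * lam / sin (2 * θ) ^ 2 * Hfun lam θ - 1 / cos θ ^ 2 := by
  unfold p0t p1t
  rw [sin_two_mul]
  field_simp
  linear_combination 4 * lam * Hfun lam θ * sin_sq_add_cos_sq θ

/-- The stationarity equations: `(sin² θ · p̃₀)' = λ (p̃₀ - p̃₁)` and
`(cos² θ · p̃₁)' = λ (p̃₁ - p̃₀)` on `(-π/2, 0)`. -/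
theorem stationarity_equations (lam : ℝ) (hlam : 0 < lam) :
    ∀ θ ∈ Set.Ioo (-(Real.pi / 2)) (0 : ℝ),
      HasDerivAt (fun x => Real.sin x ^ 2 * p0t lam x)
        (lam * (p0t lam θ - p1t lam θ)) θ ∧
      HasDerivAt (fun x => Real.cos x ^ 2 * p1t lam x)
        (lam * (p1t lam θ - p0t lam θ)) θ := by
  intro θ hθ
  have hs : sin θ ≠ 0 := (sin_neg_of_neg_of_neg_pi_lt hθ.2 (by linarith [hθ.1, pi_pos])).ne
  have hc : cos θ ≠ 0 := (cos_pos_of_mem_Ioo ⟨hθ.1, by linarith [hθ.2, pi_pos]⟩).ne'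
  have hH := hasDerivAt_Hfun hlam.le hθ
  rw [← p0t_sub_p1t hs hc] at hH
  constructor
  · refine (hH.const_mul lam).congr_of_eventuallyEq ?_
    filter_upwards [continuous_sin.continuousAt.eventually_ne hs] with x hx
    exact sin_sq_mul_p0t hx
  · refine ((hH.const_mul lam).const_sub 1).congr_deriv (by ring) |>.congr_of_eventuallyEq ?_
    filter_upwards [continuous_cos.continuousAt.eventually_ne hc] with x hx
    exact cos_sq_mul_p1t hx
end
end
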